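/- arXiv:2109.15131 — 3 statements merged into one kernel-verified Lean document; each statement's English description precedes it below -/
import Mathlib

section
/- Let F be a formal group law over a commutative ring R and let i_{z,w}F(z,w)^n ∈ R⟦w⟧((z)) denote the expansion of F(z,w)^n in negative powers of z (for n ∈ ℤ). Then i_{z,w}F(z,w)^{-n} · F(z,w)^n = 1 for all n ≥ 0. -/
/-!
A formal group law over a commutative ring `R` is a power series
`F(z,w) = Σ_{i,j≥0} F_{ij} z^i w^j ∈ R⟦z,w⟧` with `F(z,w) = F(w,z)`, `F(z,0) = z` and
`F(F(z,w),v) = F(z,F(w,v))`.  We formulate everything coefficientwise: the axioms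
and the substitutions `F(z, ι(z))` are expressed through their (finite) coefficient sums.
-/

open Finset

/-- The coefficient of `z^i w^j` in a two-variable power series. -/
noncomputable def fgCoeff {R : Type*} [CommRing R] (F : MvPowerSeries (Fin 2) R)
    (i j : ℕ) : R :=
  MvPowerSeries.coeff (Finsupp.single 0 i + Finsupp.single 1 j) F

/-- `F` is a (commutative, one-dimensional) formal group law:
commutativity `F(z,w)=F(w,z)`, unitality `F(z,0)=z`, and associativity
`F(F(z,w),v) = F(z,F(w,v))`, stated coefficientwise (the coefficient of
`z^a w^b v^c` of both sides of associativity is a finite sum, since `F` has zero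
constant term, so that `F^i` has order at least `i`). -/
def IsFormalGroupLaw {R : Type*} [CommRing R] (F : MvPowerSeries (Fin 2) R) : Prop :=
  (∀ i j : ℕ, fgCoeff F i j = fgCoeff F j i) ∧
  (∀ i : ℕ, fgCoeff F i 0 = if i = 1 then 1 else 0) ∧
  (∀ a b c : ℕ,
    ∑ i ∈ range (a + b + 1), fgCoeff F i c *
      MvPowerSeries.coeff (Finsupp.single 0 a + Finsupp.single 1 b) (F ^ i)
    = ∑ j ∈ range (b + c + 1), fgCoeff F a j *
      MvPowerSeries.coeff (Finsupp.single 0 b + Finsupp.single 1 c) (F ^ j))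

/-- `ι` is a formal inverse for `F`: it has zero constant term and satisfies
`F(z, ι(z)) = 0`, stated coefficientwise: the coefficient of `z^m` in
`Σ_{i,j} F_{ij} z^i ι(z)^j` vanishes for every `m` (the sum is finite since
`ι` has zero constant term, so `ι^j` has order at least `j`). -/
def IsFormalInverse {R : Type*} [CommRing R] (F : MvPowerSeries (Fin 2) R)
    (ι : PowerSeries R) : Prop :=
  PowerSeries.constantCoeff ι = 0 ∧
  ∀ m : ℕ, ∑ i ∈ range (m + 1), ∑ j ∈ range (m + 1),
    fgCoeff F i j * PowerSeries.coeff (m - i) (ι ^ j) = 0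

/-- The `w`-degree-`(j-k)` slice (as a power series in `z`) of `(1 + zG(z,w))^k`. -/
noncomputable def expSlice {R : Type*} [CommRing R] (G : MvPowerSeries (Fin 2) R)
    (j k : ℕ) : PowerSeries R :=
  PowerSeries.mk fun m => MvPowerSeries.coeff
    (Finsupp.single 0 m + Finsupp.single 1 (j - k))
    ((1 + MvPowerSeries.X 0 * G) ^ k)

/-- The expansion `i_{z,w} F(z,w)^n = Σ_{k≥0} C(n,k) z^{n-k} w^k (1+zG(z,w))^k` of
`F(z,w)^n = z^n (1 + w/z + wG(z,w))^n` (for `n ∈ ℤ`), as an element of `R((z))⟦w⟧`: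
in `w`-degree `j` only the summands with `k ≤ j` contribute, each contributing the
Laurent series `C(n,k) z^{n-k}` times the slice of `(1+zG)^k`. -/
noncomputable def expandZW {R : Type*} [CommRing R] (G : MvPowerSeries (Fin 2) R)
    (n : ℤ) : PowerSeries (LaurentSeries R) :=
  PowerSeries.mk fun j => ∑ k ∈ range (j + 1),
    Ring.choose n k •
      (HahnSeries.single (n - (k : ℤ)) (1 : R) *
        HahnSeries.ofPowerSeries ℤ R (expSlice G j k))

/-- A two-variable power series viewed as an element of `R((z))⟦w⟧` (power series in
the outer variable `w` whose coefficients are Laurent series in `z`). -/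
noncomputable def embedZW' {R : Type*} [CommRing R] (A : MvPowerSeries (Fin 2) R) :
    PowerSeries (LaurentSeries R) :=
  PowerSeries.mk fun j => HahnSeries.ofPowerSeries ℤ R (PowerSeries.mk fun m => fgCoeff A m j)

/-!
In `R((z))⟦w⟧` the variable `z` is a unit and `F = z (1 + u)` with `u = w z⁻¹ + w G` of positive
`w`-order, so `i_{z,w} F^a = z^a B_a(u)` for the binomial series `B_a = Σ_k C(a,k) X^k`.
Substituting `u` is a ring homomorphism, `B_a B_b = B_(a+b)` and `B_n = (1 + X)^n` for `n : ℕ`;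
hence `i_{z,w} F^(-n) · F^n = z^(-n) z^n B_0(u) = 1`.
-/

namespace PowerSeries

theorem C_mul_subst_binomialSeries_neg_mul_pow {A : Type*} [CommRing A] {c c' : A} {n : ℕ}
    (hc : c' * c ^ n = 1) {u : A⟦X⟧} (hu : constantCoeff u = 0) :
    C c' * (binomialSeries A (-n : ℤ)).subst u * (C c * (1 + u)) ^ n = 1 := by
  set φ := substAlgHom (R := A) (HasSubst.of_constantCoeff_zero' hu)
  have hφ : ∀ f : A⟦X⟧, f.subst u = φ f := fun f => by rw [coe_substAlgHom]
  have hpow : (1 + u) ^ n = φ (binomialSeries A (n : ℤ)) := by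
    rw [binomialSeries_nat, map_pow, map_add, map_one, substAlgHom_X]
  calc C c' * (binomialSeries A (-n : ℤ)).subst u * (C c * (1 + u)) ^ n
      = C (c' * c ^ n) * φ (binomialSeries A (-n + n : ℤ)) := by
        rw [mul_pow, hpow, binomialSeries_add, hφ, map_mul, map_mul, map_pow]
        ring
    _ = 1 := by rw [hc, neg_add_cancel, binomialSeries_zero, map_one, map_one, one_mul]

end PowerSeries

section

open PowerSeries

variable {R : Type*} [CommRing R]

/-- Sends `w = X 1` to `none`, which `MvPowerSeries.optionEquivLeft` makes the outer variable. -/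
def finTwoEquivOptionUnit : Fin 2 ≃ Option Unit where
  toFun i := if i = 0 then some () else none
  invFun o := o.elim 1 fun _ => 0
  left_inv := by decide
  right_inv := by decide

open MvPowerSeries in
noncomputable def embedZWHom : MvPowerSeries (Fin 2) R →+* (LaurentSeries R)⟦X⟧ :=
  (PowerSeries.map (HahnSeries.ofPowerSeries ℤ R)).comp
    ((optionEquivLeft Unit R).toRingHom.comp (renameEquiv R finTwoEquivOptionUnit).toRingHom)

open MvPowerSeries in
theorem embedZWHom_apply (A : MvPowerSeries (Fin 2) R) :
    embedZWHom A = PowerSeries.map (HahnSeries.ofPowerSeries ℤ R)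
      (optionEquivLeft Unit R (rename finTwoEquivOptionUnit A)) :=
  rfl

theorem coeff_embedZWHom (A : MvPowerSeries (Fin 2) R) (j : ℕ) :
    coeff j (embedZWHom A) = HahnSeries.ofPowerSeries ℤ R (mk fun m => fgCoeff A m j) := by
  have hexp : ∀ m : ℕ, Finsupp.optionElim j (Finsupp.single () m) =
      Finsupp.embDomain finTwoEquivOptionUnit.toEmbedding
        (Finsupp.single 0 m + Finsupp.single 1 j) := by
    intro m
    ext o
    obtain ⟨i, rfl⟩ := finTwoEquivOptionUnit.surjective o
    rw [← Equiv.coe_toEmbedding, Finsupp.embDomain_apply_self]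
    fin_cases i <;> simp [finTwoEquivOptionUnit]
  rw [embedZWHom_apply, coeff_map]
  congr 1
  ext m
  rw [coeff_mk, coeff_def (Finsupp.single_eq_same (a := ())),
    MvPowerSeries.coeff_coeff_optionEquivLeft, hexp]
  exact MvPowerSeries.coeff_embDomain_rename finTwoEquivOptionUnit.toEmbedding A _

theorem embedZW'_eq_embedZWHom (A : MvPowerSeries (Fin 2) R) : embedZW' A = embedZWHom A := by
  ext1 j
  rw [embedZW', coeff_mk, coeff_embedZWHom]

theorem embedZWHom_X_zero :
    embedZWHom (MvPowerSeries.X 0 : MvPowerSeries (Fin 2) R) = C (HahnSeries.single 1 1) := by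
  rw [embedZWHom_apply, MvPowerSeries.rename_X, show finTwoEquivOptionUnit 0 = some () from rfl,
    MvPowerSeries.optionEquivLeft_X_some, map_C]
  exact congrArg C HahnSeries.ofPowerSeries_X

theorem embedZWHom_X_one : embedZWHom (MvPowerSeries.X 1 : MvPowerSeries (Fin 2) R) = X := by
  rw [embedZWHom_apply, MvPowerSeries.rename_X, show finTwoEquivOptionUnit 1 = none from rfl,
    MvPowerSeries.optionEquivLeft_X_none, map_X]

/-- The series `u = w z⁻¹ + w G`, so that `F = z (1 + u)`. -/
noncomputable def divZSubOne (G : MvPowerSeries (Fin 2) R) : (LaurentSeries R)⟦X⟧ :=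
  C (HahnSeries.single (-1) 1) * X * embedZWHom (1 + MvPowerSeries.X 0 * G)

theorem constantCoeff_divZSubOne (G : MvPowerSeries (Fin 2) R) :
    constantCoeff (divZSubOne G) = 0 := by
  rw [divZSubOne, map_mul, map_mul, constantCoeff_X, mul_zero, zero_mul]

theorem embedZWHom_eq_C_mul_one_add_divZSubOne {F G : MvPowerSeries (Fin 2) R}
    (hG : F = MvPowerSeries.X 0 + MvPowerSeries.X 1 +
      MvPowerSeries.X 0 * MvPowerSeries.X 1 * G) :
    embedZWHom F = C (HahnSeries.single 1 1) * (1 + divZSubOne G) := by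
  have hz : C (HahnSeries.single (1 : ℤ) (1 : R)) * C (HahnSeries.single (-1) 1) = 1 := by
    rw [← map_mul, HahnSeries.single_mul_single, add_neg_cancel, mul_one,
      HahnSeries.single_zero_one, map_one]
  rw [hG, divZSubOne]
  simp only [map_add, map_mul, map_one embedZWHom, embedZWHom_X_zero, embedZWHom_X_one]
  linear_combination -(X * (1 + C (HahnSeries.single 1 1) * embedZWHom G)) * hz

theorem coeff_divZSubOne_pow (G : MvPowerSeries (Fin 2) R) (j d : ℕ) :
    coeff j (divZSubOne G ^ d) =
      if d ≤ j then HahnSeries.single (-(d : ℤ)) 1 * HahnSeries.ofPowerSeries ℤ R (expSlice G j d)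
      else 0 := by
  rw [divZSubOne, mul_pow, mul_pow, ← map_pow embedZWHom, ← map_pow C, mul_assoc, coeff_C_mul,
    coeff_X_pow_mul', HahnSeries.single_pow, smul_neg, nsmul_one, one_pow]
  split_ifs
  · rw [coeff_embedZWHom]
    rfl
  · rw [mul_zero]

theorem expandZW_eq_C_mul_subst_binomialSeries (G : MvPowerSeries (Fin 2) R) (a : ℤ) :
    expandZW G a =
      C (HahnSeries.single a 1) * (binomialSeries (LaurentSeries R) a).subst (divZSubOne G) := by
  ext1 j
  have hsupp : (Function.support fun d => coeff d (binomialSeries (LaurentSeries R) a) •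
      coeff j (divZSubOne G ^ d)) ⊆ range (j + 1) := by
    refine Function.support_subset_iff'.mpr fun d hd => ?_
    rw [coe_range, Set.mem_Iio, Nat.lt_succ_iff] at hd
    rw [coeff_divZSubOne_pow, if_neg hd, smul_zero]
  rw [expandZW, coeff_mk, coeff_C_mul,
    coeff_subst' (.of_constantCoeff_zero' (constantCoeff_divZSubOne G)),
    finsum_eq_sum_of_support_subset _ hsupp, mul_sum]
  refine sum_congr rfl fun k hk => ?_
  rw [coeff_divZSubOne_pow, if_pos (Nat.lt_succ_iff.mp (mem_range.mp hk)), binomialSeries_coeff,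
    smul_one_smul, mul_smul_comm, ← mul_assoc, HahnSeries.single_mul_single, mul_one,
    sub_eq_add_neg]

end

theorem expansion_mul_pow_eq_one_general {R : Type*} [CommRing R]
    (F G : MvPowerSeries (Fin 2) R)
    (hG : F = MvPowerSeries.X 0 + MvPowerSeries.X 1 +
      MvPowerSeries.X 0 * MvPowerSeries.X 1 * G) (n : ℕ) :
    expandZW G (-(n : ℤ)) * (embedZW' F) ^ n = 1 := by
  rw [expandZW_eq_C_mul_subst_binomialSeries, embedZW'_eq_embedZWHom,
    embedZWHom_eq_C_mul_one_add_divZSubOne hG]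
  refine PowerSeries.C_mul_subst_binomialSeries_neg_mul_pow ?_ (constantCoeff_divZSubOne G)
  rw [HahnSeries.single_pow, HahnSeries.single_mul_single, one_pow, mul_one, nsmul_one,
    neg_add_cancel, HahnSeries.single_zero_one]

/-- Let `F` be a formal group law over `R`, written
`F = z + w + zwG`, and let `i_{z,w}F(z,w)^{-n}` denote the expansion of
`F(z,w)^{-n}` in negative powers of `z`.  Then
`i_{z,w}F(z,w)^{-n} · F(z,w)^n = 1` for all `n ≥ 0`, as an identity in the
ring `R((z))⟦w⟧`. -/
theorem expansion_mul_pow_eq_one {R : Type*} [CommRing R]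
    (F G : MvPowerSeries (Fin 2) R) (hF : IsFormalGroupLaw F)
    (hG : F = MvPowerSeries.X 0 + MvPowerSeries.X 1 +
      MvPowerSeries.X 0 * MvPowerSeries.X 1 * G) (n : ℕ) :
    expandZW G (-(n : ℤ)) * (embedZW' F) ^ n = 1 :=
  expansion_mul_pow_eq_one_general F G hG n
end

section
/- In the setting of the previous construction, Y(a,z)b = Φ_*(D(z)a ⊗ b) with Φ commutative and associative, D an F-shift algebra homomorphism fixing Ω, also satisfies the skew-symmetry axiom of a vertex F-algebra (without signs, in the ungraded case): Y(a,z)b = D(z)(Y(b,ι(z))a), where ι is the formal inverse of F. Proof sketch: D(z)Φ_*(D(ι(z))b ⊗ a) = Φ_*(D(F(z,ι(z)))b ⊗ D(z)a) = Φ_*(b ⊗ D(z)a) = Φ_*(D(z)a ⊗ b). -/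
/-!
A formal group law over a commutative ring `R` is a power series
`F(z,w) = Σ_{i,j≥0} F_{ij} z^i w^j ∈ R⟦z,w⟧` with `F(z,w) = F(w,z)`, `F(z,0) = z` and
`F(F(z,w),v) = F(z,F(w,v))`.  We formulate everything coefficientwise: the axioms
and the substitutions `F(z, ι(z))` are expressed through their (finite) coefficient sums.
-/

open Finset

/-!
In generating-function form the right-hand side is the coefficient of `z^m` in
`D(z) (D(ι(z)) b · a)`. Since `D(z)` is multiplicative this equals `D(z) a · D(z) D(ι(z)) b`,
and `D(z) D(ι(z)) = D(F(z, ι(z))) = D(0) = id`: the coefficients of `F(z, ι(z))^n` are those of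
the image of `F^n` under the substitution homomorphism `(z, w) ↦ (z, ι(z))`, which kills `F`.
-/

lemma PowerSeries.coeff_pow_eq_zero_of_lt {R : Type*} [Semiring R] {φ : PowerSeries R}
    (hφ : constantCoeff φ = 0) {n k : ℕ} (h : n < k) : coeff n (φ ^ k) = 0 :=
  coeff_of_lt_order _ ((Nat.cast_lt.2 h).trans_le (le_order_pow_of_constantCoeff_eq_zero k hφ))

lemma MvPowerSeries.coeff_pow_eq_zero_of_add_lt {R : Type*} [Semiring R]
    {F : MvPowerSeries (Fin 2) R} (hF : constantCoeff F = 0) {i j n : ℕ} (h : i + j < n) :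
    coeff (Finsupp.single 0 i + Finsupp.single 1 j) (F ^ n) = 0 :=
  coeff_of_lt_order <| by
    simpa using (Nat.cast_lt.2 h).trans_le (le_order_pow_of_constantCoeff_eq_zero n hF)

section Substitution

variable {R : Type*} [CommRing R]

lemma hasSubst_X_pair {ι : PowerSeries R} (hι : PowerSeries.constantCoeff ι = 0) :
    MvPowerSeries.HasSubst ![PowerSeries.X, ι] :=
  MvPowerSeries.hasSubst_of_constantCoeff_zero fun s => by
    fin_cases s
    exacts [PowerSeries.constantCoeff_X, hι]

lemma coeff_subst_X_pair {ι : PowerSeries R} (hι : PowerSeries.constantCoeff ι = 0)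
    (A : MvPowerSeries (Fin 2) R) (M : ℕ) :
    PowerSeries.coeff M (MvPowerSeries.subst ![PowerSeries.X, ι] A) =
      ∑ i ∈ range (M + 1), ∑ j ∈ range (M + 1),
        MvPowerSeries.coeff (Finsupp.single 0 i + Finsupp.single 1 j) A *
          PowerSeries.coeff (M - i) (ι ^ j) := by
  have ha := hasSubst_X_pair hι
  let e : ℕ × ℕ ≃ (Fin 2 →₀ ℕ) := (finTwoArrowEquiv ℕ).symm.trans Finsupp.equivFunOnFinite.symm
  have he : ∀ p : ℕ × ℕ, e p = Finsupp.single 0 p.1 + Finsupp.single 1 p.2 := fun p => by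
    ext x; fin_cases x <;> simp [e]
  rw [PowerSeries.coeff_def (s := Finsupp.single () M) (n := M) Finsupp.single_eq_same,
    MvPowerSeries.coeff_subst ha, ← finsum_comp_equiv e, ← sum_product']
  simp only [Finsupp.prod_pow, Fin.prod_univ_two, Matrix.cons_val_zero, Matrix.cons_val_one,
    Matrix.cons_val_fin_one, PowerSeries.coeff_coeToMvPowerSeries, smul_eq_mul,
    PowerSeries.coeff_X_pow_mul', mul_ite, mul_zero]
  simp only [he, Finsupp.coe_add, Pi.add_apply, Finsupp.single_eq_same, ne_eq, zero_ne_one,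
    one_ne_zero, not_false_eq_true, Finsupp.single_eq_of_ne, add_zero, zero_add]
  rw [finsum_eq_sum_of_support_subset _ (s := range (M + 1) ×ˢ range (M + 1))]
  · exact sum_congr rfl fun p hp => if_pos (Nat.lt_succ_iff.1 (mem_range.1 (mem_product.1 hp).1))
  · rintro ⟨i, j⟩ hij
    simp only [Function.mem_support, ne_eq, ite_eq_right_iff, Classical.not_imp] at hij
    obtain ⟨hi, hne⟩ := hij
    have hj : j ≤ M - i := by
      by_contra! h
      exact hne (by rw [PowerSeries.coeff_pow_eq_zero_of_lt hι h, mul_zero])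
    simp only [coe_product, Set.mem_prod, mem_coe, mem_range]
    omega

lemma IsFormalGroupLaw.constantCoeff_eq_zero {F : MvPowerSeries (Fin 2) R}
    (hF : IsFormalGroupLaw F) : MvPowerSeries.constantCoeff F = 0 := by
  simpa [fgCoeff] using hF.2.1 0

lemma IsFormalInverse.subst_eq_zero {F : MvPowerSeries (Fin 2) R} {ι : PowerSeries R}
    (hι : IsFormalInverse F ι) : MvPowerSeries.subst ![PowerSeries.X, ι] F = 0 := by
  ext M
  rw [coeff_subst_X_pair hι.1]
  exact hι.2 M

end Substitution

section ShiftOperator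

variable {R V : Type*} [CommRing R] [AddCommMonoid V] [Module R V]

lemma sum_shift_comp_shift_inverse {F : MvPowerSeries (Fin 2) R} {ι : PowerSeries R}
    (hF0 : MvPowerSeries.constantCoeff F = 0) (hι0 : PowerSeries.constantCoeff ι = 0)
    (hFι : MvPowerSeries.subst ![PowerSeries.X, ι] F = 0)
    {D : ℕ → V →ₗ[R] V} (hD0 : ∀ v : V, D 0 v = v)
    (hDcomp : ∀ (i j : ℕ) (v : V), D i (D j v)
      = ∑ n ∈ range (i + j + 1),
          MvPowerSeries.coeff (Finsupp.single 0 i + Finsupp.single 1 j) (F ^ n) • D n v)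
    (b : V) (s : ℕ) :
    ∑ q ∈ range (s + 1), D q (∑ k ∈ range (s - q + 1), PowerSeries.coeff (s - q) (ι ^ k) • D k b)
      = if s = 0 then b else 0 := by
  calc
    _ = ∑ q ∈ range (s + 1), ∑ k ∈ range (s + 1), ∑ n ∈ range (s + 1),
          (MvPowerSeries.coeff (Finsupp.single 0 q + Finsupp.single 1 k) (F ^ n) *
            PowerSeries.coeff (s - q) (ι ^ k)) • D n b := by
      refine sum_congr rfl fun q hq => ?_
      rw [mem_range] at hq
      rw [map_sum, ← sum_subset (range_subset_range.2 (show s - q + 1 ≤ s + 1 by omega))]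
      · refine sum_congr rfl fun k hk => ?_
        rw [mem_range] at hk
        rw [map_smul, hDcomp, smul_sum,
          ← sum_subset (range_subset_range.2 (show q + k + 1 ≤ s + 1 by omega))]
        · exact sum_congr rfl fun n _ => by rw [smul_smul, mul_comm]
        · intro n _ hn
          rw [mem_range, not_lt] at hn
          rw [MvPowerSeries.coeff_pow_eq_zero_of_add_lt hF0 (by omega), zero_mul, zero_smul]
      · intro k _ hk
        rw [mem_range, not_lt] at hk
        refine sum_eq_zero fun n _ => ?_
        rw [PowerSeries.coeff_pow_eq_zero_of_lt hι0 (by omega), mul_zero, zero_smul]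
    _ = ∑ n ∈ range (s + 1),
          PowerSeries.coeff s (MvPowerSeries.subst ![PowerSeries.X, ι] F ^ n) • D n b := by
      rw [sum_comm_cycle]
      refine sum_congr rfl fun n _ => ?_
      rw [← MvPowerSeries.subst_pow (hasSubst_X_pair hι0), coeff_subst_X_pair hι0, sum_smul]
      exact sum_congr rfl fun q _ => (sum_smul ..).symm
    _ = if s = 0 then b else 0 := by
      rw [sum_range_succ']
      simp [hFι, hD0, PowerSeries.coeff_one]

end ShiftOperator

lemma sum_apply_mul_eq_sum_mul_sum {V : Type*} [Semiring V] {D : ℕ → V → V}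
    (hDmul : ∀ (k : ℕ) (a b : V), D k (a * b) = ∑ p ∈ range (k + 1), D p a * D (k - p) b)
    (a : V) (E : ℕ → V) (m : ℕ) :
    ∑ p ∈ range (m + 1), D p (a * E (m - p)) =
      ∑ r ∈ range (m + 1), D r a * ∑ q ∈ range (m - r + 1), D q (E (m - r - q)) := by
  calc
    _ = ∑ p ∈ range (m + 1), ∑ r ∈ range (p + 1), D r a * D (p - r) (E (m - r - (p - r))) := by
      refine sum_congr rfl fun p hp => ?_
      rw [hDmul]
      refine sum_congr rfl fun r hr => ?_
      rw [mem_range] at hp hr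
      rw [show m - r - (p - r) = m - p by omega]
    _ = ∑ r ∈ range (m + 1), ∑ q ∈ range (m + 1 - r), D r a * D q (E (m - r - q)) :=
      sum_range_diag_flip (m + 1) fun r q => D r a * D q (E (m - r - q))
    _ = _ := by
      refine sum_congr rfl fun r hr => ?_
      rw [mem_range] at hr
      rw [mul_sum, show m + 1 - r = m - r + 1 by omega]

theorem commutative_construction_skew_symmetry_general {R : Type*} [CommRing R]
    (F : MvPowerSeries (Fin 2) R) (hF : IsFormalGroupLaw F)
    (ι : PowerSeries R) (hι : IsFormalInverse F ι)
    {V : Type*} [CommRing V] [Algebra R V]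
    (D : ℕ → V →ₗ[R] V)
    (hD0 : ∀ v : V, D 0 v = v)
    (hDcomp : ∀ (i j : ℕ) (v : V), D i (D j v)
      = ∑ n ∈ range (i + j + 1),
          MvPowerSeries.coeff (Finsupp.single 0 i + Finsupp.single 1 j) (F ^ n) • D n v)
    (hDmul : ∀ (k : ℕ) (a b : V), D k (a * b) = ∑ p ∈ range (k + 1), D p a * D (k - p) b) :
    ∀ (m : ℕ) (a b : V),
      D m a * b
        = ∑ p ∈ range (m + 1),
            D p (∑ k ∈ range (m - p + 1),
              PowerSeries.coeff (m - p) (ι ^ k) • (D k b * a)) := by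
  intro m a b
  -- `E j` is the coefficient of `z^j` in `D(ι(z)) b`.
  let E (j : ℕ) : V := ∑ k ∈ range (j + 1), PowerSeries.coeff j (ι ^ k) • D k b
  have hinv := sum_shift_comp_shift_inverse hF.constantCoeff_eq_zero hι.1 hι.subst_eq_zero hD0 hDcomp b
  calc
    D m a * b = ∑ r ∈ range (m + 1), D r a * if m - r = 0 then b else 0 := by
      rw [sum_range_succ, Nat.sub_self, if_pos rfl, right_eq_add]
      exact sum_eq_zero fun r hr => by rw [if_neg (by simp at hr; omega), mul_zero]
    _ = ∑ r ∈ range (m + 1), D r a * ∑ q ∈ range (m - r + 1), D q (E (m - r - q)) := by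
      simp only [E, hinv]
    _ = ∑ p ∈ range (m + 1), D p (a * E (m - p)) := (sum_apply_mul_eq_sum_mul_sum hDmul a E m).symm
    _ = _ := by
      refine sum_congr rfl fun p _ => congrArg (D p) ?_
      rw [mul_comm, sum_mul]
      simp only [smul_mul_assoc]

/-- Let `F` be a formal group law over `R` with formal inverse `ι`,
`V` a commutative `R`-algebra (commutative associative product `Φ_*` with unit
`Ω = 1`), and `D(z) = Σ_k D_k z^k` an `F`-shift operator on `V` which is an algebra
homomorphism fixing `Ω`.  Then `Y(a,z)b = Φ_*(D(z)a ⊗ b)` satisfies the (ungraded,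
signless) skew-symmetry axiom `Y(a,z)b = D(z)(Y(b,ι(z))a)`, stated coefficientwise at
`z^m`: the coefficient of `z^j` in `Y(b,ι(z))a = Σ_k D_k(b)·a · ι(z)^k` is the finite
sum `Σ_{k≤j} (ι^k)_j • (D_k b · a)` (finite since `ι` has zero constant term), and
applying `D(z)` gives the coefficient `Σ_{p+j=m} D_p(⋯)` at `z^m`. -/
theorem commutative_construction_skew_symmetry {R : Type*} [CommRing R]
    (F : MvPowerSeries (Fin 2) R) (hF : IsFormalGroupLaw F)
    (ι : PowerSeries R) (hι : IsFormalInverse F ι)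
    {V : Type*} [CommRing V] [Algebra R V]
    (D : ℕ → V →ₗ[R] V)
    (hD0 : ∀ v : V, D 0 v = v)
    (hDcomp : ∀ (i j : ℕ) (v : V), D i (D j v)
      = ∑ n ∈ range (i + j + 1),
          MvPowerSeries.coeff (Finsupp.single 0 i + Finsupp.single 1 j) (F ^ n) • D n v)
    (hDmul : ∀ (k : ℕ) (a b : V), D k (a * b) = ∑ p ∈ range (k + 1), D p a * D (k - p) b)
    (hD1 : ∀ k : ℕ, 0 < k → D k (1 : V) = 0) :
    ∀ (m : ℕ) (a b : V),
      D m a * b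
        = ∑ p ∈ range (m + 1),
            D p (∑ k ∈ range (m - p + 1),
              PowerSeries.coeff (m - p) (ι ^ k) • (D k b * a)) :=
  commutative_construction_skew_symmetry_general F hF ι hι D hD0 hDcomp hDmul
end

section
/- Let F be a formal group law over R with formal inverse ι. Weak F-associativity for the commutative construction: for Y(a,z)b = Φ_*(D(z)a ⊗ b) with Φ commutative associative, unit Ω, and D an F-shift algebra homomorphism, we have the exact (N = 0) identity Y(Y(a,z)b, w)c = Y(a, F(z,w)) Y(b,w) c in V⟦z,w⟧. -/
/-!
A formal group law over a commutative ring `R` is a power series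
`F(z,w) = Σ_{i,j≥0} F_{ij} z^i w^j ∈ R⟦z,w⟧` with `F(z,w) = F(w,z)`, `F(z,0) = z` and
`F(F(z,w),v) = F(z,F(w,v))`.  We formulate everything coefficientwise: the axioms
and the substitutions `F(z, ι(z))` are expressed through their (finite) coefficient sums.
-/

open Finset

/-
`D(w)` is multiplicative, so the left side is `(D(w)D(z)a) · (D(w)b) · c`, and
`D(w)D(z) = D(F(w,z)) = D(F(z,w))` by commutativity of `F`.  Commutativity passes to the
powers `F ^ n` because it says that `F` is fixed by the variable swap, a ring map.
-/

namespace MvPowerSeries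

theorem coeff_rename_swap {R : Type*} [CommSemiring R] (G : MvPowerSeries (Fin 2) R) (i j : ℕ) :
    coeff (Finsupp.single 0 i + Finsupp.single 1 j) (rename (Equiv.swap (0 : Fin 2) 1) G)
      = coeff (Finsupp.single 0 j + Finsupp.single 1 i) G := by
  have hswap : Finsupp.embDomain (Equiv.swap (0 : Fin 2) 1).toEmbedding
      (Finsupp.single 0 j + Finsupp.single 1 i) = Finsupp.single 0 i + Finsupp.single 1 j := by
    simp [Finsupp.embDomain_add, Finsupp.embDomain_single, add_comm]
  rw [← hswap]
  exact coeff_embDomain_rename _ G _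

end MvPowerSeries

open MvPowerSeries

theorem IsFormalGroupLaw.rename_swap {R : Type*} [CommRing R] {F : MvPowerSeries (Fin 2) R}
    (hF : IsFormalGroupLaw F) : rename (Equiv.swap (0 : Fin 2) 1) F = F := by
  ext d
  obtain ⟨i, j, rfl⟩ : ∃ i j : ℕ, d = Finsupp.single 0 i + Finsupp.single 1 j :=
    ⟨d 0, d 1, by ext x; fin_cases x <;> simp⟩
  exact (coeff_rename_swap F i j).trans (hF.1 j i)

theorem IsFormalGroupLaw.coeff_pow_comm {R : Type*} [CommRing R] {F : MvPowerSeries (Fin 2) R}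
    (hF : IsFormalGroupLaw F) (n i j : ℕ) :
    coeff (Finsupp.single 0 i + Finsupp.single 1 j) (F ^ n)
      = coeff (Finsupp.single 0 j + Finsupp.single 1 i) (F ^ n) := by
  rw [← coeff_rename_swap, map_pow, hF.rename_swap]

theorem commutative_construction_associativity_general {R : Type*} [CommRing R]
    (F : MvPowerSeries (Fin 2) R) (hF : IsFormalGroupLaw F)
    {V : Type*} [CommRing V] [Algebra R V]
    (D : ℕ → V →ₗ[R] V)
    (hDcomp : ∀ (i j : ℕ) (v : V), D i (D j v)
      = ∑ n ∈ range (i + j + 1),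
          MvPowerSeries.coeff (Finsupp.single 0 i + Finsupp.single 1 j) (F ^ n) • D n v)
    (hDmul : ∀ (k : ℕ) (a b : V), D k (a * b) = ∑ p ∈ range (k + 1), D p a * D (k - p) b) :
    ∀ (i j : ℕ) (a b c : V),
      D j (D i a * b) * c
        = ∑ j' ∈ range (j + 1), ∑ n ∈ range (i + (j - j') + 1),
            MvPowerSeries.coeff (Finsupp.single 0 i + Finsupp.single 1 (j - j')) (F ^ n) •
              (D n a * (D j' b * c)) := by
  intro i j a b c
  rw [hDmul, sum_mul, ← sum_range_reflect]
  refine sum_congr rfl fun p hp => ?_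
  rw [Nat.add_sub_cancel, Nat.sub_sub_self (mem_range_succ_iff.mp hp), hDcomp, add_comm (j - p),
    sum_mul, sum_mul]
  refine sum_congr rfl fun n _ => ?_
  rw [hF.coeff_pow_comm, smul_mul_assoc, smul_mul_assoc, mul_assoc]

/-- Let `F` be a formal group law over `R`, `V` a commutative
`R`-algebra (commutative associative product with unit `Ω = 1`), and
`D(z) = Σ_k D_k z^k` an `F`-shift operator on `V` which is an algebra homomorphism.
For `Y(a,z)b = Φ_*(D(z)a ⊗ b)` the exact (`N = 0`) weak `F`-associativity identity
`Y(Y(a,z)b, w)c = Y(a, F(z,w)) Y(b,w) c` holds in `V⟦z,w⟧`: comparing coefficients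
of `z^i w^j`, the left side is `D_j(D_i(a)·b)·c` and the right side is the finite sum
`Σ_{j'≤j} Σ_{n ≤ i+(j-j')} (F^n)_{i,j-j'} • (D_n a · (D_{j'} b · c))`. -/
theorem commutative_construction_associativity {R : Type*} [CommRing R]
    (F : MvPowerSeries (Fin 2) R) (hF : IsFormalGroupLaw F)
    {V : Type*} [CommRing V] [Algebra R V]
    (D : ℕ → V →ₗ[R] V)
    (hD0 : ∀ v : V, D 0 v = v)
    (hDcomp : ∀ (i j : ℕ) (v : V), D i (D j v)
      = ∑ n ∈ range (i + j + 1),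
          MvPowerSeries.coeff (Finsupp.single 0 i + Finsupp.single 1 j) (F ^ n) • D n v)
    (hDmul : ∀ (k : ℕ) (a b : V), D k (a * b) = ∑ p ∈ range (k + 1), D p a * D (k - p) b)
    (hD1 : ∀ k : ℕ, 0 < k → D k (1 : V) = 0) :
    ∀ (i j : ℕ) (a b c : V),
      D j (D i a * b) * c
        = ∑ j' ∈ range (j + 1), ∑ n ∈ range (i + (j - j') + 1),
            MvPowerSeries.coeff (Finsupp.single 0 i + Finsupp.single 1 (j - j')) (F ^ n) •
              (D n a * (D j' b * c)) :=
  commutative_construction_associativity_general F hF D hDcomp hDmul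
end
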